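/- Let (Ω, μ) be a measure space and p : Ω → ℝ measurable with 1 < p⁻ ≤ p⁺ < ∞, and let p'(x) be defined by 1/p(x) + 1/p'(x) = 1. For u ∈ L^{p(·)}(Ω) and v ∈ L^{p'(·)}(Ω), |∫_Ω u v dμ| ≤ (1/p⁻ + 1/(p')⁻)·|u|_{p(·)}·|v|_{p'(·)}. -/

import Mathlib

/-! For every `c` above the Luxemburg norm of `u` and `d` above that of `v` one has
`∫ |u/c|^p ≤ 1` and `∫ |v/d|^{p'} ≤ 1`. Young's inequality
`st ≤ s^p/p + t^{p'}/p' ≤ s^p/p⁻ + t^{p'}/(p')⁻`, applied to `s = |u/c|`, `t = |v/d|` and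
integrated, gives `|∫ uv| ≤ (1/p⁻ + 1/(p')⁻) c d`; then let `c` and `d` decrease to the norms.
The bound `p ≤ p⁺` (and hence `p' ≤ p⁻/(p⁻ - 1)`) makes `|u/c|^p` integrable for every `c > 0`,
so that `∫ |u/c|^p ≤ 1` is never satisfied through the junk value `0` of a non-integrable
Bochner integral. -/

open MeasureTheory

noncomputable def luxemburgNorm {Ω : Type*} [MeasurableSpace Ω] (μ : Measure Ω)
    (r : Ω → ℝ) (u : Ω → ℝ) : ℝ :=
  sInf {c : ℝ | 0 < c ∧ ∫ x, |u x / c| ^ r x ∂μ ≤ 1}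

open Filter Real Topology

section EssentialBounds

variable {α : Type*} [MeasurableSpace α] {μ : Measure α} {f : α → ℝ}

lemma Real.essInf_measure_zero : essInf f (0 : Measure α) = 0 := by
  simp [essInf, Filter.liminf, Filter.limsInf]

lemma ne_zero_of_essInf_ne_zero (h : essInf f μ ≠ 0) : μ ≠ 0 := by
  rintro rfl
  exact h Real.essInf_measure_zero

-- Unbounded functions get the junk values `sInf ∅ = 0` and `sSup ∅ = 0`.
lemma ae_le_essSup_of_ne_zero (h : essSup f μ ≠ 0) : ∀ᵐ x ∂μ, f x ≤ essSup f μ := by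
  refine ae_le_essSup ?_
  by_contra hf
  refine h ?_
  rw [essSup, limsup, limsSup, ← Real.sInf_empty]
  exact congrArg sInf (Set.eq_empty_of_forall_notMem fun b hb ↦ hf ⟨b, hb⟩)

lemma ae_essInf_le_of_ne_zero (h : essInf f μ ≠ 0) : ∀ᵐ x ∂μ, essInf f μ ≤ f x := by
  refine ae_essInf_le ?_
  by_contra hf
  refine h ?_
  rw [essInf, liminf, limsInf, ← Real.sSup_empty]
  exact congrArg sSup (Set.eq_empty_of_forall_notMem fun b hb ↦ hf ⟨b, hb⟩)

end EssentialBounds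

lemma Real.HolderConjugate.le_conjExponent {a p q : ℝ} (hpq : p.HolderConjugate q) (ha : 1 < a)
    (hap : a ≤ p) : q ≤ a.conjExponent := by
  rw [hpq.conjugate_eq, Real.conjExponent, div_le_div_iff₀ hpq.sub_one_pos (by linarith)]
  nlinarith

section Modular

variable {Ω : Type*} [MeasurableSpace Ω] {μ : Measure Ω} {r u : Ω → ℝ} {a b c : ℝ}

lemma integrable_abs_rpow (hr : Measurable r) (hu : Measurable u)
    (hu_lt : ∫⁻ x, ENNReal.ofReal (|u x| ^ r x) ∂μ < ⊤) :
    Integrable (fun x ↦ |u x| ^ r x) μ :=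
  (lintegral_ofReal_ne_top_iff_integrable (hu.abs.pow hr).aestronglyMeasurable
    (.of_forall fun _ ↦ rpow_nonneg (abs_nonneg _) _)).1 hu_lt.ne

lemma abs_div_rpow_eq {y c t : ℝ} (hc : 0 < c) : |y / c| ^ t = c⁻¹ ^ t * |y| ^ t := by
  rw [abs_div, abs_of_pos hc, div_eq_inv_mul, mul_rpow (inv_nonneg.2 hc.le) (abs_nonneg y)]

lemma rpow_le_max_rpow {x s t₁ t₂ : ℝ} (hx : 0 < x) (h₁ : t₁ ≤ s) (h₂ : s ≤ t₂) :
    x ^ s ≤ max (x ^ t₁) (x ^ t₂) := by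
  rcases le_total x 1 with hx1 | hx1
  · exact le_max_of_le_left (rpow_le_rpow_of_exponent_ge hx hx1 h₁)
  · exact le_max_of_le_right (rpow_le_rpow_of_exponent_le hx1 h₂)

lemma integrable_abs_div_rpow (hr : Measurable r) (hu : Measurable u)
    (hra : ∀ᵐ x ∂μ, a ≤ r x) (hrb : ∀ᵐ x ∂μ, r x ≤ b)
    (hint : Integrable (fun x ↦ |u x| ^ r x) μ) (hc : 0 < c) :
    Integrable (fun x ↦ |u x / c| ^ r x) μ := by
  refine (hint.const_mul (max (c⁻¹ ^ a) (c⁻¹ ^ b))).mono'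
    ((hu.div_const c).abs.pow hr).aestronglyMeasurable ?_
  filter_upwards [hra, hrb] with x hxa hxb
  rw [norm_of_nonneg (rpow_nonneg (abs_nonneg _) _), abs_div_rpow_eq hc]
  gcongr
  exact rpow_le_max_rpow (inv_pos.2 hc) hxa hxb

lemma integral_abs_div_rpow_le_of_le (hr : ∀ᵐ x ∂μ, 0 ≤ r x) {d : ℝ} (hc : 0 < c) (hcd : c ≤ d)
    (hint : Integrable (fun x ↦ |u x / c| ^ r x) μ) :
    ∫ x, |u x / d| ^ r x ∂μ ≤ ∫ x, |u x / c| ^ r x ∂μ := by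
  refine integral_mono_of_nonneg (.of_forall fun _ ↦ rpow_nonneg (abs_nonneg _) _) hint ?_
  filter_upwards [hr] with x hx
  rw [abs_div_rpow_eq hc, abs_div_rpow_eq (hc.trans_le hcd)]
  gcongr ?_ * _
  exact rpow_le_rpow (inv_pos.2 (hc.trans_le hcd)).le (inv_anti₀ hc hcd) hx

lemma exists_integral_abs_div_rpow_le_one (ha : 0 < a) (hra : ∀ᵐ x ∂μ, a ≤ r x)
    (hint : Integrable (fun x ↦ |u x| ^ r x) μ) :
    ∃ c, 0 < c ∧ ∫ x, |u x / c| ^ r x ∂μ ≤ 1 := by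
  set T := ∫ x, |u x| ^ r x ∂μ
  -- `c ≥ 1` gives `|u / c| ^ r ≤ c⁻¹ ^ a * |u| ^ r`, and `c ^ a ≥ T`
  set c := max 1 T ^ a⁻¹
  have hc1 : 1 ≤ c := one_le_rpow (le_max_left _ _) (inv_nonneg.2 ha.le)
  have hc0 : 0 < c := one_pos.trans_le hc1
  have hca : c ^ a = max 1 T := by
    rw [← rpow_mul (zero_le_one.trans (le_max_left 1 T)), inv_mul_cancel₀ ha.ne', rpow_one]
  refine ⟨c, hc0, ?_⟩
  calc ∫ x, |u x / c| ^ r x ∂μ ≤ ∫ x, c⁻¹ ^ a * |u x| ^ r x ∂μ := by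
        refine integral_mono_of_nonneg (.of_forall fun _ ↦ rpow_nonneg (abs_nonneg _) _)
          (hint.const_mul _) ?_
        filter_upwards [hra] with x hx
        rw [abs_div_rpow_eq hc0]
        gcongr ?_ * _
        exact rpow_le_rpow_of_exponent_ge (inv_pos.2 hc0) (inv_le_one_of_one_le₀ hc1) hx
    _ = T / max 1 T := by rw [integral_const_mul, inv_rpow hc0.le, hca, inv_mul_eq_div]
    _ ≤ 1 := div_le_one_of_le₀ (le_max_right _ _) (zero_le_one.trans (le_max_left _ _))

lemma integral_abs_div_rpow_le_one_of_luxemburgNorm_lt (hr : Measurable r) (hu : Measurable u)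
    (ha : 0 < a) (hra : ∀ᵐ x ∂μ, a ≤ r x) (hrb : ∀ᵐ x ∂μ, r x ≤ b)
    (hint : Integrable (fun x ↦ |u x| ^ r x) μ) (hc : luxemburgNorm μ r u < c) :
    0 < c ∧ ∫ x, |u x / c| ^ r x ∂μ ≤ 1 := by
  obtain ⟨c', ⟨hc'0, hc'1⟩, hc'c⟩ :=
    exists_lt_of_csInf_lt (exists_integral_abs_div_rpow_le_one ha hra hint) hc
  refine ⟨hc'0.trans hc'c, le_trans ?_ hc'1⟩
  exact integral_abs_div_rpow_le_of_le (hra.mono fun x hx ↦ ha.le.trans hx) hc'0 hc'c.le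
    (integrable_abs_div_rpow hr hu hra hrb hint hc'0)

end Modular

section Holder

variable {Ω : Type*} [MeasurableSpace Ω] {μ : Measure Ω} {p q u v : Ω → ℝ} {a b : ℝ}

lemma abs_integral_mul_le_of_integral_rpow_le_one (ha : 0 < a) (hb : 0 < b)
    (hpq : ∀ᵐ x ∂μ, (p x).HolderConjugate (q x)) (hpa : ∀ᵐ x ∂μ, a ≤ p x)
    (hqb : ∀ᵐ x ∂μ, b ≤ q x) (hu : Integrable (fun x ↦ |u x| ^ p x) μ)
    (hv : Integrable (fun x ↦ |v x| ^ q x) μ) (hu1 : ∫ x, |u x| ^ p x ∂μ ≤ 1)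
    (hv1 : ∫ x, |v x| ^ q x ∂μ ≤ 1) :
    |∫ x, u x * v x ∂μ| ≤ 1 / a + 1 / b := by
  have young : ∀ᵐ x ∂μ, |u x * v x| ≤ |u x| ^ p x / a + |v x| ^ q x / b := by
    filter_upwards [hpq, hpa, hqb] with x hx hxa hxb
    rw [abs_mul]
    refine (young_inequality_of_nonneg (abs_nonneg _) (abs_nonneg _) hx).trans ?_
    gcongr
  calc |∫ x, u x * v x ∂μ| ≤ ∫ x, |u x * v x| ∂μ := abs_integral_le_integral_abs
    _ ≤ ∫ x, (|u x| ^ p x / a + |v x| ^ q x / b) ∂μ :=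
        integral_mono_of_nonneg (.of_forall fun _ ↦ abs_nonneg _)
          ((hu.div_const _).add (hv.div_const _)) young
    _ = (∫ x, |u x| ^ p x ∂μ) / a + (∫ x, |v x| ^ q x ∂μ) / b := by
        rw [integral_add (hu.div_const _) (hv.div_const _), integral_div, integral_div]
    _ ≤ 1 / a + 1 / b := by gcongr

lemma abs_integral_mul_le_of_integral_abs_div_rpow_le_one {c d : ℝ} (hc : 0 < c) (hd : 0 < d)
    (ha : 0 < a) (hb : 0 < b)
    (hpq : ∀ᵐ x ∂μ, (p x).HolderConjugate (q x)) (hpa : ∀ᵐ x ∂μ, a ≤ p x)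
    (hqb : ∀ᵐ x ∂μ, b ≤ q x) (hu : Integrable (fun x ↦ |u x / c| ^ p x) μ)
    (hv : Integrable (fun x ↦ |v x / d| ^ q x) μ) (hu1 : ∫ x, |u x / c| ^ p x ∂μ ≤ 1)
    (hv1 : ∫ x, |v x / d| ^ q x ∂μ ≤ 1) :
    |∫ x, u x * v x ∂μ| ≤ (1 / a + 1 / b) * c * d := by
  have h := abs_integral_mul_le_of_integral_rpow_le_one ha hb hpq hpa hqb hu hv hu1 hv1
  have hscale : ∫ x, u x / c * (v x / d) ∂μ = (∫ x, u x * v x ∂μ) / (c * d) := by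
    rw [← integral_div]
    congr 1 with x
    ring
  rw [hscale, abs_div, abs_of_pos (mul_pos hc hd), div_le_iff₀ (mul_pos hc hd)] at h
  linarith

end Holder

lemma le_mul_mul_of_forall_lt {z K x y : ℝ} (h : ∀ c, x < c → ∀ d, y < d → z ≤ K * c * d) :
    z ≤ K * x * y := by
  have hlim : Tendsto (fun ε ↦ K * (x + ε) * (y + ε)) (𝓝[>] 0) (𝓝 (K * x * y)) := by
    have hcont : Continuous fun ε ↦ K * (x + ε) * (y + ε) := by fun_prop
    simpa using (hcont.tendsto 0).mono_left nhdsWithin_le_nhds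
  refine ge_of_tendsto hlim (eventually_nhdsWithin_of_forall fun ε (hε : 0 < ε) ↦ ?_)
  exact h _ (lt_add_of_pos_right x hε) _ (lt_add_of_pos_right y hε)

theorem stmt_14 {Ω : Type*} [MeasurableSpace Ω] (μ : Measure Ω)
    (p p' u v : Ω → ℝ) (hp : Measurable p) (hp' : Measurable p')
    (hu : Measurable u) (hv : Measurable v)
    (pm pp p'm : ℝ) (hpm : pm = essInf p μ) (hpp : pp = essSup p μ)
    (hp'm : p'm = essInf p' μ) (h1 : 1 < pm) (h2 : pm ≤ pp)
    (hconj : ∀ x, 1 / p x + 1 / p' x = 1)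
    (humem : (∫⁻ x, ENNReal.ofReal (|u x| ^ p x) ∂μ) < ⊤)
    (hvmem : (∫⁻ x, ENNReal.ofReal (|v x| ^ p' x) ∂μ) < ⊤) :
    |∫ x, u x * v x ∂μ| ≤ (1 / pm + 1 / p'm) * luxemburgNorm μ p u * luxemburgNorm μ p' v := by
  subst hpm hpp hp'm
  have : (ae μ).NeBot := ae_neBot.2 (ne_zero_of_essInf_ne_zero (by linarith))
  have hp_lb := ae_essInf_le_of_ne_zero (f := p) (μ := μ) (by linarith)
  have hp_ub := ae_le_essSup_of_ne_zero (f := p) (μ := μ) (by linarith)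
  have hpp' : ∀ᵐ x ∂μ, (p x).HolderConjugate (p' x) := hp_lb.mono fun x hx ↦
    holderConjugate_iff.2 ⟨h1.trans_le hx, by simpa only [one_div] using hconj x⟩
  have hp'_lb : ∀ᵐ x ∂μ, 1 ≤ p' x := hpp'.mono fun x hx ↦ hx.symm.lt.le
  have hp'_ub : ∀ᵐ x ∂μ, p' x ≤ (essInf p μ).conjExponent := by
    filter_upwards [hpp', hp_lb] with x hx hxp
    exact hx.le_conjExponent h1 hxp
  have hp'm : 1 ≤ essInf p' μ :=
    le_essInf_of_ae_le 1 hp'_lb (isCoboundedUnder_ge_of_eventually_le _ hp'_ub)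
  have hp'm_lb := ae_essInf_le_of_ne_zero (f := p') (μ := μ) (by linarith)
  have hu_int := integrable_abs_rpow hp hu humem
  have hv_int := integrable_abs_rpow hp' hv hvmem
  refine le_mul_mul_of_forall_lt fun c hc d hd ↦ ?_
  obtain ⟨hc0, hcu⟩ := integral_abs_div_rpow_le_one_of_luxemburgNorm_lt hp hu (by linarith)
    hp_lb hp_ub hu_int hc
  obtain ⟨hd0, hdv⟩ := integral_abs_div_rpow_le_one_of_luxemburgNorm_lt hp' hv one_pos
    hp'_lb hp'_ub hv_int hd
  exact abs_integral_mul_le_of_integral_abs_div_rpow_le_one hc0 hd0 (by linarith) (by linarith)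
    hpp' hp_lb hp'm_lb (integrable_abs_div_rpow hp hu hp_lb hp_ub hu_int hc0)
    (integrable_abs_div_rpow hp' hv hp'_lb hp'_ub hv_int hd0) hcu hdv
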